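/- Let α be a cascading n-sequence with lower-subinterval decomposition I_1, ..., I_P. Suppose k₁ < k₂, max(I_{k₁}) = max(I_{k₂}) = m, applying f_{I_{k₁}} to R_{k₁-1} adds a box to column i₁ of the m-th partition (via its final operator f_m), and applying f_{I_{k₂}} to R_{k₂-1} adds a box to column i₂ of the m-th partition (via its final operator f_m). Then i₁ < i₂. -/

import Mathlib

namespace CascRC

abbrev RP := Multiset (ℕ × ℤ)
abbrev RC := ℕ → RP

/-- The Cartan matrix of type `A`. -/
def cartanA (a b : ℕ) : ℤ :=
  if a = b then 2 else if b = a + 1 ∨ a = b + 1 then -1 else 0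

/-- The smallest rigging of a rigged partition (0 if empty). -/
noncomputable def minRig (ν : RP) : ℤ :=
  if h : ν = 0 then 0
  else (ν.map Prod.snd).toFinset.min'
    (Multiset.toFinset_nonempty.mpr (by simpa [Multiset.map_eq_zero] using h))

/-- The greatest length of a string whose rigging is the smallest rigging. -/
noncomputable def selLen (ν : RP) : ℕ :=
  ((ν.filter (fun s => s.2 = minRig ν)).map Prod.fst).sup

/-- The Kashiwara operator `f_a` on rigged configurations. -/
noncomputable def fOp (a : ℕ) (R : RC) : RC :=
  if R a = 0 ∨ 0 < minRig (R a) then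
    fun b => (if b = a then ({(1, -1)} : RP) else 0)
      + (R b).map (fun s => if 0 < s.1 then (s.1, s.2 - cartanA a b) else s)
  else
    fun b =>
      (if b = a then ({(selLen (R a) + 1, minRig (R a) - 1)} : RP) else 0)
      + ((if b = a then (R a).erase (selLen (R a), minRig (R a)) else R b).map
          (fun s => if selLen (R a) < s.1 then (s.1, s.2 - cartanA a b) else s))

/-- A list `γ` acts by `f_γ = f_{γ_p} ∘ ⋯ ∘ f_{γ₁}`. -/
noncomputable def fList (γ : List ℕ) (R : RC) : RC :=
  γ.foldl (fun S a => fOp a S) R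

def emptyRC : RC := fun _ => 0

/-- `RC(α)`: the result of the list `α` acting on the empty rigged configuration. -/
noncomputable def RCseq (α : List ℕ) : RC := fList α emptyRC

/-- The `m`-lower subinterval `(a, a+1, …, m)`. -/
def lowerInt (a m : ℕ) : List ℕ := List.range' a (m + 1 - a)

def IsLowerIv (n : ℕ) (p : ℕ × ℕ) : Prop := 1 ≤ p.1 ∧ p.1 ≤ p.2 ∧ p.2 ≤ n

/-- Ordering between consecutive lower subintervals in a cascading sequence. -/
def CascCh (p q : ℕ × ℕ) : Prop := q.2 < p.2 ∨ (q.2 = p.2 ∧ p.1 ≤ q.1)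

/-- `ivs` is the lower-subinterval decomposition of a cascading `n`-sequence. -/
def IsCascDecomp (n : ℕ) (ivs : List (ℕ × ℕ)) : Prop :=
  (∀ p ∈ ivs, IsLowerIv n p) ∧ ivs.Chain' CascCh

/-- The integer sequence determined by a decomposition into lower subintervals. -/
def seqOf (ivs : List (ℕ × ℕ)) : List ℕ :=
  (ivs.map (fun p => lowerInt p.1 p.2)).flatten

/-- `R_k`: the rigged configuration corresponding to `I_1 ⋯ I_k`. -/
noncomputable def Rk (ivs : List (ℕ × ℕ)) (k : ℕ) : RC :=
  RCseq (seqOf (ivs.take k))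

/-- Height of column `c` of (the underlying partition of) a rigged partition. -/
def colHt (ν : RP) (c : ℕ) : ℕ := (ν.filter (fun s => c ≤ s.1)).card

/-- Length of the `i`-th row (1-based) of the underlying partition. -/
def rowLen (ν : RP) (i : ℕ) : ℕ :=
  ((Finset.Icc 1 ((ν.map Prod.fst).sup)).filter (fun c => i ≤ colHt ν c)).card

/-- Length of the uppermost row of length at most `L` (0 for the virtual empty row). -/
def upRowLen (ν : RP) (L : ℕ) : ℕ := rowLen ν (colHt ν (L + 1) + 1)

/-- The column to which an application of `f_a` adds a box. -/
noncomputable def selCol (a : ℕ) (R : RC) : ℕ :=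
  if R a = 0 ∨ 0 < minRig (R a) then 1 else selLen (R a) + 1

/-- Given a lower subinterval `p = (a, m)` acting on `R`, the column to which the
operator `f_l` occurring in it adds a box in the `l`-th partition. -/
noncomputable def ivCol (p : ℕ × ℕ) (l : ℕ) (R : RC) : ℕ :=
  selCol l (fList (lowerInt p.1 (l - 1)) R)

/-- Lengths `|r_a|, |r_{a+1}|, …` of the rows `r_i` of Lemma "snake":
`rLenSeq R a (i - a) = |r_i|`. -/
def rLenSeq (R : RC) (a : ℕ) : ℕ → ℕ
  | 0 => rowLen (R a) 1
  | k + 1 => upRowLen (R (a + k + 1)) (rLenSeq R a k)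



/-! ### Auxiliary lemmas -/

lemma minRig_le (ν : RP) (hν : ν ≠ 0) {s : ℕ × ℤ} (hs : s ∈ ν) : minRig ν ≤ s.2 := by
  rw [minRig, dif_neg hν]
  exact Finset.min'_le _ _ (Multiset.mem_toFinset.mpr (Multiset.mem_map_of_mem _ hs))

lemma le_minRig (ν : RP) (hν : ν ≠ 0) (r : ℤ) (h : ∀ s ∈ ν, r ≤ s.2) : r ≤ minRig ν := by
  rw [minRig, dif_neg hν]
  refine Finset.le_min' _ _ _ ?_
  intro y hy
  obtain ⟨s, hs, rfl⟩ := Multiset.mem_map.mp (Multiset.mem_toFinset.mp hy)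
  exact h s hs

lemma le_selLen (ν : RP) {s : ℕ × ℤ} (hs : s ∈ ν) (h : s.2 = minRig ν) : s.1 ≤ selLen ν := by
  refine Multiset.le_sup ?_
  exact Multiset.mem_map_of_mem _ (Multiset.mem_filter.mpr ⟨hs, h⟩)

/-- A `+1` bump on all strings of length greater than `t`. -/
def bump (t : ℕ) (ν : RP) : RP :=
  ν.map (fun s => if t < s.1 then (s.1, s.2 + 1) else s)

/-- The fine structure of a rigged partition just after `f_m` added a box to column `L`. -/
def Good (ν : RP) (L : ℕ) (y : ℤ) : Prop :=
  (L, y) ∈ ν ∧ y ≤ -1 ∧ (∀ s ∈ ν, y ≤ s.2) ∧ (∀ s ∈ ν, s.1 < L → y + 1 ≤ s.2)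

lemma selCol_ge (m L : ℕ) (r : ℤ) (R : RC) (hr : r ≤ 0) (hmem : (L, r) ∈ R m)
    (hmin : ∀ s ∈ R m, r ≤ s.2) : L + 1 ≤ selCol m R := by
  have hne : R m ≠ 0 := by
    intro h; rw [h] at hmem; exact absurd hmem (Multiset.notMem_zero _)
  have hmr : minRig (R m) = r :=
    le_antisymm (minRig_le _ hne hmem) (le_minRig _ hne r hmin)
  have hcase : ¬(R m = 0 ∨ 0 < minRig (R m)) := by
    rw [hmr]; push_neg; exact ⟨hne, hr⟩
  rw [selCol, if_neg hcase]
  have : L ≤ selLen (R m) := le_selLen _ hmem (by rw [hmr])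
  omega

lemma cartanA_self (m : ℕ) : cartanA m m = 2 := by simp [cartanA]

lemma cartanA_pred (c : ℕ) : cartanA c (c + 1) = -1 := by
  unfold cartanA
  rw [if_neg (by omega), if_pos (Or.inl rfl)]

lemma cartanA_far (c m : ℕ) (h1 : m ≠ c) (h2 : m ≠ c + 1) (h3 : c ≠ m + 1) :
    cartanA c m = 0 := by
  unfold cartanA
  rw [if_neg (fun h => h1 h.symm), if_neg (by rintro (h | h) <;> omega)]

lemma good_fOp (m : ℕ) (S : RC) : ∃ y : ℤ, Good ((fOp m S) m) (selCol m S) y := by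
  by_cases hcase : S m = 0 ∨ 0 < minRig (S m)
  · refine ⟨-1, ?_, le_refl _, ?_, ?_⟩
    · simp only [fOp, if_pos hcase, if_pos rfl, selCol, Multiset.mem_add]
      exact Or.inl (Multiset.mem_singleton_self _)
    · intro s hs
      simp only [fOp, if_pos hcase, if_pos rfl, Multiset.mem_add] at hs
      rcases hs with hs | hs
      · rw [Multiset.mem_singleton.mp hs]
      · obtain ⟨u, hu, rfl⟩ := Multiset.mem_map.mp hs
        have hSm : S m ≠ 0 := by
          intro h; rw [h] at hu; exact absurd hu (Multiset.notMem_zero _)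
        have hpos : 0 < minRig (S m) := by
          rcases hcase with h | h
          · exact absurd h hSm
          · exact h
        have hu2 : 1 ≤ u.2 := (lt_of_lt_of_le hpos (minRig_le _ hSm hu))
        by_cases hcond : 0 < u.1
        · simp only [cartanA_self, if_pos hcond]; simp; omega
        · simp only [if_neg hcond]; omega
    · intro s hs hlt
      simp only [fOp, if_pos hcase, if_pos rfl, Multiset.mem_add] at hs
      have hL : selCol m S = 1 := by rw [selCol, if_pos hcase]
      rw [hL] at hlt
      rcases hs with hs | hs
      · rw [Multiset.mem_singleton.mp hs] at hlt; omega
      · obtain ⟨u, hu, rfl⟩ := Multiset.mem_map.mp hs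
        have hSm : S m ≠ 0 := by
          intro h; rw [h] at hu; exact absurd hu (Multiset.notMem_zero _)
        have hpos : 0 < minRig (S m) := by
          rcases hcase with h | h
          · exact absurd h hSm
          · exact h
        have hu2 : 1 ≤ u.2 := (lt_of_lt_of_le hpos (minRig_le _ hSm hu))
        by_cases hcond : 0 < u.1
        · rw [if_pos hcond] at hlt; simp at hlt; omega
        · rw [if_neg hcond] at hlt
          simp only [if_neg hcond]
          omega
  · have hne : S m ≠ 0 := fun h => hcase (Or.inl h)
    have hle : minRig (S m) ≤ 0 := by
      by_contra h; exact hcase (Or.inr (by omega))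
    refine ⟨minRig (S m) - 1, ?_, by omega, ?_, ?_⟩
    · simp only [fOp, if_neg hcase, if_pos rfl, selCol, Multiset.mem_add]
      exact Or.inl (Multiset.mem_singleton_self _)
    · intro s hs
      simp only [fOp, if_neg hcase, if_pos rfl, Multiset.mem_add] at hs
      rcases hs with hs | hs
      · rw [Multiset.mem_singleton.mp hs]
      · obtain ⟨u, hu, rfl⟩ := Multiset.mem_map.mp hs
        have huS : u ∈ S m := Multiset.mem_of_mem_erase hu
        have hu2 : minRig (S m) ≤ u.2 := minRig_le _ hne huS
        by_cases hcond : selLen (S m) < u.1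
        · have hne2 : u.2 ≠ minRig (S m) := by
            intro h
            have := le_selLen _ huS h
            omega
          simp only [cartanA_self, if_pos hcond]
          simp; omega
        · simp only [if_neg hcond]; omega
    · intro s hs hlt
      simp only [fOp, if_neg hcase, if_pos rfl, Multiset.mem_add] at hs
      have hL : selCol m S = selLen (S m) + 1 := by rw [selCol, if_neg hcase]
      rw [hL] at hlt
      rcases hs with hs | hs
      · rw [Multiset.mem_singleton.mp hs] at hlt ⊢; simp at hlt
      · obtain ⟨u, hu, rfl⟩ := Multiset.mem_map.mp hs
        have huS : u ∈ S m := Multiset.mem_of_mem_erase hu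
        have hu2 : minRig (S m) ≤ u.2 := minRig_le _ hne huS
        by_cases hcond : selLen (S m) < u.1
        · rw [if_pos hcond] at hlt; simp at hlt; omega
        · rw [if_neg hcond] at hlt
          simp only [if_neg hcond]
          omega

lemma bump_keep (ν : RP) (L : ℕ) (y : ℤ) (t : ℕ) (h : Good ν L y) :
    ∃ r ≤ 0, (L, r) ∈ bump t ν ∧ ∀ s ∈ bump t ν, r ≤ s.2 := by
  obtain ⟨hmem, hy, hmin, hshort⟩ := h
  by_cases ht : t < L
  · refine ⟨y + 1, by omega, ?_, ?_⟩
    · refine Multiset.mem_map.mpr ⟨(L, y), hmem, ?_⟩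
      simp [ht]
    · intro s hs
      obtain ⟨u, hu, rfl⟩ := Multiset.mem_map.mp hs
      split <;> rename_i hcond
      · have := hmin u hu; simp; omega
      · have := hshort u hu (by omega); omega
  · refine ⟨y, by omega, ?_, ?_⟩
    · refine Multiset.mem_map.mpr ⟨(L, y), hmem, ?_⟩
      simp [ht]
    · intro s hs
      obtain ⟨u, hu, rfl⟩ := Multiset.mem_map.mp hs
      have := hmin u hu
      split
      · simp; omega
      · omega

lemma fList_nil (R : RC) : fList [] R = R := rfl

lemma fList_append (γ₁ γ₂ : List ℕ) (R : RC) :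
    fList (γ₁ ++ γ₂) R = fList γ₂ (fList γ₁ R) := List.foldl_append

lemma fOp_far (c m : ℕ) (T : RC) (h1 : m ≠ c) (h2 : m ≠ c + 1) (h3 : c ≠ m + 1) :
    fOp c T m = T m := by
  have hc : cartanA c m = 0 := cartanA_far c m h1 h2 h3
  have hmap : ∀ ν : RP,
      ν.map (fun s => if 0 < s.1 then (s.1, s.2 - cartanA c m) else s) = ν := by
    intro ν
    rw [show (fun s : ℕ × ℤ => if 0 < s.1 then (s.1, s.2 - cartanA c m) else s) = id by
      funext s; rw [hc]; split <;> simp]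
    exact Multiset.map_id _
  have hmap2 : ∀ ν : RP,
      ν.map (fun s => if selLen (T c) < s.1 then (s.1, s.2 - cartanA c m) else s) = ν := by
    intro ν
    rw [show (fun s : ℕ × ℤ => if selLen (T c) < s.1 then (s.1, s.2 - cartanA c m) else s)
        = id by funext s; rw [hc]; split <;> simp]
    exact Multiset.map_id _
  by_cases hcase : T c = 0 ∨ 0 < minRig (T c)
  · simp only [fOp, if_pos hcase, if_neg h1, hmap, zero_add]
  · simp only [fOp, if_neg hcase, if_neg h1, hmap2, zero_add]

lemma fOp_pred (c : ℕ) (T : RC) : ∃ t, fOp c T (c + 1) = bump t (T (c + 1)) := by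
  have hne : (c : ℕ) + 1 ≠ c := by omega
  have hc : cartanA c (c + 1) = -1 := cartanA_pred c
  by_cases hcase : T c = 0 ∨ 0 < minRig (T c)
  · refine ⟨0, ?_⟩
    simp only [fOp, if_pos hcase, if_neg hne, zero_add, bump]
    congr 1
    funext s
    rw [hc]
    split <;> simp
  · refine ⟨selLen (T c), ?_⟩
    simp only [fOp, if_neg hcase, if_neg hne, zero_add, bump]
    congr 1
    funext s
    rw [hc]
    split <;> simp

lemma fList_small (γ : List ℕ) (m : ℕ) (h : ∀ b ∈ γ, b + 1 < m) (R : RC) :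
    fList γ R m = R m := by
  induction γ generalizing R with
  | nil => rfl
  | cons b γ ih =>
    have hb := h b (List.mem_cons_self)
    have : fList (b :: γ) R = fList γ (fOp b R) := rfl
    rw [this, ih (fun x hx => h x (List.mem_cons_of_mem _ hx)),
      fOp_far b m R (by omega) (by omega) (by omega)]

lemma lowerInt_mem {a M b : ℕ} (hb : b ∈ lowerInt a M) : a ≤ b ∧ b ≤ M := by
  rw [lowerInt, List.mem_range'_1] at hb
  omega

lemma lowerInt_concat (a m : ℕ) (ha : 1 ≤ a) (h : a ≤ m) :
    lowerInt a m = lowerInt a (m - 1) ++ [m] := by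
  unfold lowerInt
  have h1 : m + 1 - a = (m - a) + 1 := by omega
  have h2 : (m - 1) + 1 - a = m - a := by omega
  rw [h1, h2, List.range'_concat]
  congr 2
  omega

lemma fList_lower_pred (a m : ℕ) (ha : 1 ≤ a) (ham : a ≤ m) (R : RC) :
    (∃ t, fList (lowerInt a (m - 1)) R m = bump t (R m)) ∨
      fList (lowerInt a (m - 1)) R m = R m := by
  rcases eq_or_lt_of_le ham with rfl | hlt
  · right
    have : lowerInt a (a - 1) = [] := by
      unfold lowerInt
      have : (a - 1) + 1 - a = 0 := by omega
      rw [this, List.range'_zero]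
    rw [this, fList_nil]
  · left
    have hm1 : 1 ≤ m - 1 := by omega
    have ham1 : a ≤ m - 1 := by omega
    rw [lowerInt_concat a (m - 1) ha ham1, fList_append]
    have hT : fList (lowerInt a (m - 1 - 1)) R m = R m := by
      refine fList_small _ m (fun b hb => ?_) R
      have := lowerInt_mem hb
      omega
    obtain ⟨t, ht⟩ := fOp_pred (m - 1) (fList (lowerInt a (m - 1 - 1)) R)
    rw [show m - 1 + 1 = m by omega] at ht
    refine ⟨t, ?_⟩
    have hstep : fList [m - 1] (fList (lowerInt a (m - 1 - 1)) R)
        = fOp (m - 1) (fList (lowerInt a (m - 1 - 1)) R) := rfl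
    rw [hstep, ht, hT]

lemma adj_pair (m : ℕ) (p q : ℕ × ℕ) (hp1 : 1 ≤ p.1) (hpm : p.1 ≤ m) (hp2 : p.2 = m)
    (hq1 : 1 ≤ q.1) (hqm : q.1 ≤ m) (R : RC) :
    ivCol p m R + 1 ≤ ivCol q m (fList (lowerInt p.1 p.2) R) := by
  have hRm : fList (lowerInt p.1 p.2) R
      = fOp m (fList (lowerInt p.1 (m - 1)) R) := by
    rw [hp2, lowerInt_concat p.1 m hp1 hpm, fList_append]
    rfl
  rw [hp2] at hRm
  obtain ⟨y, hGood⟩ := good_fOp m (fList (lowerInt p.1 (m - 1)) R)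
  simp only [ivCol, hp2, hRm]
  rcases fList_lower_pred q.1 m hq1 hqm (fOp m (fList (lowerInt p.1 (m - 1)) R))
      with ⟨t, ht⟩ | hid
  · obtain ⟨r, hr0, hmem, hmin⟩ := bump_keep _ _ _ t hGood
    rw [← ht] at hmem hmin
    exact selCol_ge m _ r _ hr0 hmem hmin
  · obtain ⟨hmem, hy, hmin, _⟩ := hGood
    rw [← hid] at hmem hmin
    exact selCol_ge m _ y _ (by omega) hmem hmin

lemma Rk_succ (ivs : List (ℕ × ℕ)) (j : ℕ) (hj : j < ivs.length) :
    Rk ivs (j + 1) = fList (lowerInt (ivs[j]'hj).1 (ivs[j]'hj).2) (Rk ivs j) := by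
  unfold Rk RCseq
  rw [← List.take_concat_get hj]
  have : seqOf ((List.take j ivs).concat ivs[j])
      = seqOf (List.take j ivs) ++ lowerInt (ivs[j]'hj).1 (ivs[j]'hj).2 := by
    unfold seqOf
    rw [List.concat_eq_append, List.map_append, List.flatten_append]
    simp
  rw [this, fList_append]

/-- If `I_{k₁}` and `I_{k₂}` are lower subintervals of a cascading `n`-sequence with
`k₁ < k₂` and common maximum `m` (0-based indices), the box added by the final
operator `f_m` of `I_{k₁}` lies in a column strictly to the left of the box added by
the final operator `f_m` of `I_{k₂}`. -/
theorem contributing_columns_increase (n : ℕ) (hn : 0 < n)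
    (ivs : List (ℕ × ℕ)) (hc : IsCascDecomp n ivs)
    (m : ℕ) (k₁ k₂ : ℕ) (h12 : k₁ < k₂) (hk₂ : k₂ < ivs.length)
    (hm₁ : (ivs[k₁]'(lt_trans h12 hk₂)).2 = m) (hm₂ : (ivs[k₂]'hk₂).2 = m)
    (i₁ i₂ : ℕ)
    (hi₁ : ivCol (ivs[k₁]'(lt_trans h12 hk₂)) m (Rk ivs k₁) = i₁)
    (hi₂ : ivCol (ivs[k₂]'hk₂) m (Rk ivs k₂) = i₂) :
    i₁ < i₂ := by
  subst hi₁ hi₂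
  have hlen1 : k₁ < ivs.length := lt_trans h12 hk₂
  haveI : IsTrans (ℕ × ℕ) CascCh := ⟨by
    intro p q r hpq hqr
    unfold CascCh at *
    omega⟩
  have hpw := List.isChain_iff_pairwise.mp hc.2
  have hmax : ∀ i j (hi : i < ivs.length) (hj : j < ivs.length), i < j →
      (ivs[j]'hj).2 ≤ (ivs[i]'hi).2 := by
    intro i j hi hj hij
    have := (List.pairwise_iff_getElem.mp hpw) i j hi hj hij
    unfold CascCh at this
    omega
  have hall : ∀ j, k₁ ≤ j → j ≤ k₂ → ∀ (hj : j < ivs.length), (ivs[j]'hj).2 = m := by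
    intro j h1 h2 hj
    rcases eq_or_lt_of_le h1 with rfl | hlt1
    · exact hm₁
    rcases eq_or_lt_of_le h2 with rfl | hlt2
    · exact hm₂
    have ha := hmax k₁ j hlen1 hj hlt1
    have hb := hmax j k₂ hj hk₂ hlt2
    omega
  have hstep : ∀ j, k₁ ≤ j → j + 1 ≤ k₂ → ∀ (hj1 : j + 1 < ivs.length),
      ivCol (ivs[j]'(by omega)) m (Rk ivs j) + 1
        ≤ ivCol (ivs[j + 1]'hj1) m (Rk ivs (j + 1)) := by
    intro j hja hjb hj1
    have hjlen : j < ivs.length := by omega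
    have hpj : IsLowerIv n (ivs[j]'hjlen) := hc.1 _ (List.getElem_mem _)
    have hpj1 : IsLowerIv n (ivs[j + 1]'hj1) := hc.1 _ (List.getElem_mem _)
    have hmj : (ivs[j]'hjlen).2 = m := hall j hja (by omega) hjlen
    have hmj1 : (ivs[j + 1]'hj1).2 = m := hall (j + 1) (by omega) hjb hj1
    rw [Rk_succ ivs j hjlen]
    exact adj_pair m (ivs[j]'hjlen) (ivs[j + 1]'hj1) hpj.1 (hmj ▸ hpj.2.1) hmj
      hpj1.1 (hmj1 ▸ hpj1.2.1) (Rk ivs j)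
  have key : ∀ k, k₁ + 1 ≤ k → k ≤ k₂ → ∀ (hk : k < ivs.length),
      ivCol (ivs[k₁]'hlen1) m (Rk ivs k₁) < ivCol (ivs[k]'hk) m (Rk ivs k) := by
    intro k hk
    induction k, hk using Nat.le_induction with
    | base =>
      intro hle hlt
      have := hstep k₁ le_rfl hle hlt
      omega
    | succ k hk ih =>
      intro hle hlt
      have hkk : k < ivs.length := by omega
      have h1 := ih (by omega) hkk
      have h2 := hstep k (by omega) hle hlt
      omega
  exact key k₂ h12 le_rfl hk₂

end CascRC
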